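/- arXiv:2111.10753 — 3 statements merged into one kernel-verified Lean document; each statement's English description precedes it below -/
import Mathlib

section
/- Let R be a commutative ring, n a natural number, and for each index u in Fin n let s_u, e_u, u_u, e0_u, e1_u, e2_u, m_u, α_u be elements of R; let a, k ∈ R. Define pk := Σ_u (-(a*s_u + e_u)), c0_u := a*u_u + e0_u, c1_u := pk*u_u + e1_u + k*m_u, ĉ0 := Σ_u α_u * c0_u, ĉ1 := Σ_u α_u * c1_u, and NS := Σ_u α_u*e1_u + (Σ_u α_u*e0_u)*(Σ_u s_u) + Σ_u e2_u - (Σ_u α_u*u_u)*(Σ_u e_u). Then ĉ1 + ĉ0*(Σ_u s_u) + Σ_u e2_u = k*(Σ_u α_u*m_u) + NS. -/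
theorem stmt1 {R : Type*} [CommRing R] (n : ℕ)
    (s e uu e0 e1 e2 m α : Fin n → R) (a k : R)
    (pk : R) (hpk : pk = ∑ u, -(a * s u + e u))
    (c0 c1 : Fin n → R)
    (hc0 : ∀ u, c0 u = a * uu u + e0 u)
    (hc1 : ∀ u, c1 u = pk * uu u + e1 u + k * m u)
    (chat0 chat1 : R)
    (hchat0 : chat0 = ∑ u, α u * c0 u)
    (hchat1 : chat1 = ∑ u, α u * c1 u)
    (NS : R)
    (hNS : NS = (∑ u, α u * e1 u) + (∑ u, α u * e0 u) * (∑ u, s u)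
      + (∑ u, e2 u) - (∑ u, α u * uu u) * (∑ u, e u)) :
    chat1 + chat0 * (∑ u, s u) + (∑ u, e2 u)
      = k * (∑ u, α u * m u) + NS := by
  have hpk' : pk = -(a * (∑ u, s u) + ∑ u, e u) := by
    rw [hpk]; simp [neg_add, Finset.sum_add_distrib, Finset.mul_sum]
  have h1 : chat1 = pk * (∑ u, α u * uu u) + (∑ u, α u * e1 u)
      + k * (∑ u, α u * m u) := by
    rw [hchat1, Finset.mul_sum, Finset.mul_sum, ← Finset.sum_add_distrib,
      ← Finset.sum_add_distrib]
    exact Finset.sum_congr rfl fun u _ => by rw [hc1 u]; ring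
  have h0 : chat0 = a * (∑ u, α u * uu u) + (∑ u, α u * e0 u) := by
    rw [hchat0, Finset.mul_sum, ← Finset.sum_add_distrib]
    exact Finset.sum_congr rfl fun u _ => by rw [hc0 u]; ring
  rw [h1, h0, hpk', hNS]; ring
end

section
/- Let d ≥ 1 and let f ∈ ℤ[X] be a monic polynomial with natDegree f = d. For p ∈ ℤ[X] write ‖p‖ for the maximum of the absolute values of its coefficients (the infinity norm). Let δ, A, B be nonnegative integers, and suppose δ satisfies the expansion-factor property: for all a, b ∈ ℤ[X] with natDegree a < d and natDegree b < d, ‖(a·b) modByMonic f‖ ≤ δ·‖a‖·‖b‖. Let n ≥ 1, and for each u in Fin n let s_u, e_u, u_u, e0_u, e1_u, e2_u, α_u ∈ ℤ[X] all have natDegree < d, with ‖α_u‖ ≤ A, ‖e_u‖ ≤ B, ‖e0_u‖ ≤ B, ‖e1_u‖ ≤ B, ‖e2_u‖ ≤ B, ‖s_u‖ ≤ 1, and ‖u_u‖ ≤ 1. Writing a ⊛ b := (a·b) modByMonic f for the ring multiplication of R = ℤ[X]/(f), define NS := Σ_u (α_u ⊛ e1_u) + (Σ_u (α_u ⊛ e0_u))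 ⊛ (Σ_u s_u) + Σ_u e2_u - (Σ_u (α_u ⊛ u_u)) ⊛ (Σ_u e_u). Then ‖NS‖ ≤ n·B·(1 + δ·A·(1 + 2·δ·n)). -/
open Polynomial

/-- The infinity norm of an integer polynomial: the maximum of the absolute
values of its coefficients. -/
noncomputable def infNorm (p : Polynomial ℤ) : ℕ :=
  p.support.sup fun i => (p.coeff i).natAbs

/-
Each of the four summands of `NS` is bounded separately. Sums of `n` terms cost a factor `n`
by subadditivity of the infinity norm, and each reduced product `(a * b) %ₘ f` costs a factor `δ`;
this applies to the outer products as well because reduction modulo the monic `f` of degree `d`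
keeps the degree below `d`. The four bounds `nδAB`, `δ²n²AB`, `nB` and `δ²n²AB` add up to
`nB(1 + δA(1 + 2δn))`.
-/

lemma infNorm_coeff_le (p : ℤ[X]) (i : ℕ) : (p.coeff i).natAbs ≤ infNorm p := by
  by_cases h : i ∈ p.support
  · exact Finset.le_sup (f := fun i => (p.coeff i).natAbs) h
  · simp [notMem_support_iff.mp h]

lemma infNorm_le_of_forall_coeff_le {p : ℤ[X]} {N : ℕ} (h : ∀ i, (p.coeff i).natAbs ≤ N) :
    infNorm p ≤ N :=
  Finset.sup_le fun i _ => h i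

@[simp]
lemma infNorm_zero : infNorm 0 = 0 := rfl

lemma infNorm_add_le (p q : ℤ[X]) : infNorm (p + q) ≤ infNorm p + infNorm q :=
  infNorm_le_of_forall_coeff_le fun i => by
    rw [coeff_add]
    exact (Int.natAbs_add_le _ _).trans (add_le_add (infNorm_coeff_le p i) (infNorm_coeff_le q i))

lemma infNorm_sub_le (p q : ℤ[X]) : infNorm (p - q) ≤ infNorm p + infNorm q :=
  infNorm_le_of_forall_coeff_le fun i => by
    rw [coeff_sub]
    exact (Int.natAbs_sub_le _ _).trans (add_le_add (infNorm_coeff_le p i) (infNorm_coeff_le q i))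

lemma infNorm_sum_le_card_mul {ι : Type*} (s : Finset ι) (p : ι → ℤ[X]) {C : ℕ}
    (h : ∀ i ∈ s, infNorm (p i) ≤ C) : infNorm (∑ i ∈ s, p i) ≤ s.card * C :=
  calc infNorm (∑ i ∈ s, p i)
      ≤ ∑ i ∈ s, infNorm (p i) :=
        Finset.le_sum_of_subadditive infNorm infNorm_zero.le infNorm_add_le s p
    _ ≤ s.card * C := Finset.sum_le_card_nsmul s _ C h

lemma natDegree_sum_lt {R ι : Type*} [Semiring R] {d : ℕ} (hd : 0 < d) (s : Finset ι)
    (p : ι → R[X]) (h : ∀ i ∈ s, (p i).natDegree < d) : (∑ i ∈ s, p i).natDegree < d :=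
  Nat.lt_of_le_pred hd <|
    natDegree_sum_le_of_forall_le s p fun i hi => Nat.le_pred_of_lt (h i hi)

lemma natDegree_modByMonic_lt_of_pos {R : Type*} [CommRing R] (p : R[X]) {f : R[X]}
    (hf : f.Monic) (hfd : 0 < f.natDegree) : (p %ₘ f).natDegree < f.natDegree :=
  natDegree_modByMonic_lt p hf fun h => by simp [h] at hfd

section ExpansionFactor

variable {d δ : ℕ} {f : ℤ[X]}
  (hδ : ∀ a b : ℤ[X], a.natDegree < d → b.natDegree < d →
    infNorm ((a * b) %ₘ f) ≤ δ * infNorm a * infNorm b)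
include hδ

lemma infNorm_mul_modByMonic_le {a b : ℤ[X]} {A C : ℕ} (ha : a.natDegree < d)
    (hb : b.natDegree < d) (hA : infNorm a ≤ A) (hC : infNorm b ≤ C) :
    infNorm ((a * b) %ₘ f) ≤ δ * A * C :=
  (hδ a b ha hb).trans (by gcongr)

lemma infNorm_sum_mul_modByMonic_le {ι : Type*} (s : Finset ι) {a b : ι → ℤ[X]} {A C : ℕ}
    (ha : ∀ i, (a i).natDegree < d) (hb : ∀ i, (b i).natDegree < d)
    (hA : ∀ i, infNorm (a i) ≤ A) (hC : ∀ i, infNorm (b i) ≤ C) :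
    infNorm (∑ i ∈ s, (a i * b i) %ₘ f) ≤ s.card * (δ * A * C) :=
  infNorm_sum_le_card_mul s _ fun i _ =>
    infNorm_mul_modByMonic_le hδ (ha i) (hb i) (hA i) (hC i)

end ExpansionFactor
theorem stmt7_general (d : ℕ) (hd : 1 ≤ d) (f : Polynomial ℤ) (hf : f.Monic)
    (hfd : f.natDegree = d) (δ A B : ℕ)
    (hδ : ∀ a b : Polynomial ℤ, a.natDegree < d → b.natDegree < d →
      infNorm ((a * b) %ₘ f) ≤ δ * infNorm a * infNorm b)
    (n : ℕ)
    (s e uu e0 e1 e2 α : Fin n → Polynomial ℤ)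
    (hsdeg : ∀ u, (s u).natDegree < d) (hedeg : ∀ u, (e u).natDegree < d)
    (huudeg : ∀ u, (uu u).natDegree < d) (he0deg : ∀ u, (e0 u).natDegree < d)
    (he1deg : ∀ u, (e1 u).natDegree < d)
    (hαdeg : ∀ u, (α u).natDegree < d)
    (hα : ∀ u, infNorm (α u) ≤ A)
    (he : ∀ u, infNorm (e u) ≤ B) (he0 : ∀ u, infNorm (e0 u) ≤ B)
    (he1 : ∀ u, infNorm (e1 u) ≤ B) (he2 : ∀ u, infNorm (e2 u) ≤ B)
    (hs : ∀ u, infNorm (s u) ≤ 1) (huu : ∀ u, infNorm (uu u) ≤ 1)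
    (NS : Polynomial ℤ)
    (hNS : NS = (∑ u, (α u * e1 u) %ₘ f)
      + ((∑ u, (α u * e0 u) %ₘ f) * (∑ u, s u)) %ₘ f
      + (∑ u, e2 u)
      - ((∑ u, (α u * uu u) %ₘ f) * (∑ u, e u)) %ₘ f) :
    infNorm NS ≤ n * B * (1 + δ * A * (1 + 2 * δ * n)) := by
  have hmod (p : ℤ[X]) : (p %ₘ f).natDegree < d :=
    hfd ▸ natDegree_modByMonic_lt_of_pos p hf (hfd ▸ hd)
  have hsum {p : Fin n → ℤ[X]} (h : ∀ u, (p u).natDegree < d) : (∑ u, p u).natDegree < d :=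
    natDegree_sum_lt hd _ _ fun u _ => h u
  have hE1 := infNorm_sum_mul_modByMonic_le hδ .univ hαdeg he1deg hα he1
  have hE0 := infNorm_sum_mul_modByMonic_le hδ .univ hαdeg he0deg hα he0
  have hU := infNorm_sum_mul_modByMonic_le hδ .univ hαdeg huudeg hα huu
  have hS := infNorm_sum_le_card_mul .univ s fun u _ => hs u
  have hE := infNorm_sum_le_card_mul .univ e fun u _ => he u
  have hE2 := infNorm_sum_le_card_mul .univ e2 fun u _ => he2 u
  have hE0S := infNorm_mul_modByMonic_le hδ (hsum fun _ => hmod _) (hsum hsdeg) hE0 hS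
  have hUE := infNorm_mul_modByMonic_le hδ (hsum fun _ => hmod _) (hsum hedeg) hU hE
  rw [Finset.card_fin] at hE1 hE0S hE2 hUE
  subst hNS
  calc _ ≤ _ + _ + _ + _ := (infNorm_sub_le _ _).trans <| add_le_add_left
        ((infNorm_add_le _ _).trans <| add_le_add_left (infNorm_add_le _ _) _) _
    _ ≤ n * (δ * A * B) + δ * (n * (δ * A * B)) * (n * 1) + n * B
          + δ * (n * (δ * A * 1)) * (n * B) := by gcongr
    _ = n * B * (1 + δ * A * (1 + 2 * δ * n)) := by ring

theorem stmt7 (d : ℕ) (hd : 1 ≤ d) (f : Polynomial ℤ) (hf : f.Monic)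
    (hfd : f.natDegree = d) (δ A B : ℕ)
    (hδ : ∀ a b : Polynomial ℤ, a.natDegree < d → b.natDegree < d →
      infNorm ((a * b) %ₘ f) ≤ δ * infNorm a * infNorm b)
    (n : ℕ) (hn : 1 ≤ n)
    (s e uu e0 e1 e2 α : Fin n → Polynomial ℤ)
    (hsdeg : ∀ u, (s u).natDegree < d) (hedeg : ∀ u, (e u).natDegree < d)
    (huudeg : ∀ u, (uu u).natDegree < d) (he0deg : ∀ u, (e0 u).natDegree < d)
    (he1deg : ∀ u, (e1 u).natDegree < d) (he2deg : ∀ u, (e2 u).natDegree < d)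
    (hαdeg : ∀ u, (α u).natDegree < d)
    (hα : ∀ u, infNorm (α u) ≤ A)
    (he : ∀ u, infNorm (e u) ≤ B) (he0 : ∀ u, infNorm (e0 u) ≤ B)
    (he1 : ∀ u, infNorm (e1 u) ≤ B) (he2 : ∀ u, infNorm (e2 u) ≤ B)
    (hs : ∀ u, infNorm (s u) ≤ 1) (huu : ∀ u, infNorm (uu u) ≤ 1)
    (NS : Polynomial ℤ)
    (hNS : NS = (∑ u, (α u * e1 u) %ₘ f)
      + ((∑ u, (α u * e0 u) %ₘ f) * (∑ u, s u)) %ₘ f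
      + (∑ u, e2 u)
      - ((∑ u, (α u * uu u) %ₘ f) * (∑ u, e u)) %ₘ f) :
    infNorm NS ≤ n * B * (1 + δ * A * (1 + 2 * δ * n)) :=
  stmt7_general d hd f hf hfd δ A B hδ n s e uu e0 e1 e2 α hsdeg hedeg huudeg he0deg he1deg hαdeg hα
    he he0 he1 he2 hs huu NS hNS
end

section
/- Let F be a field, t ≥ 1, V a finite subset of F with |V| = t and 0 ∉ V, and for v ∈ V define the Lagrange coefficient li_v := Π_{w ∈ V, w ≠ v} w/(w - v). Let n ≥ 1 and for each index i in Fin n let s_i, e_i, u_i, e0_i, e1_i, e2_i, m_i, α_i ∈ F, let a, k ∈ F, and let g_i, h_i ∈ F[X] be polynomials with degree < t such that g_i(0) = s_i and h_i(0) = e2_i. Define pk := Σ_i (-(a·s_i + e_i)), c0_i := a·u_i + e0_i, c1_i := pk·u_i + e1_i + k·m_i, ĉ0 := Σ_i α_i·c0_i, ĉ1 := Σ_i α_i·c1_i, and for each v ∈ V the partial decryption m̂_v := ĉ0·(Σ_i g_i(v)) + Σ_i h_i(v). Then ĉ1 + Σ_{v ∈ V} li_v·m̂_v = k·(Σ_i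 α_i·m_i) + NS, where NS := Σ_i α_i·e1_i + (Σ_i α_i·e0_i)·(Σ_i s_i) + Σ_i e2_i - (Σ_i α_i·u_i)·(Σ_i e_i). -/
open Polynomial Finset

lemma lagrange_at_zero {F : Type*} [Field F] [DecidableEq F]
    (V : Finset F) (h0 : (0 : F) ∉ V) (p : F[X]) (hdeg : p.degree < (V.card : WithBot ℕ)) :
    ∑ v ∈ V, (∏ w ∈ V.erase v, w / (w - v)) * p.eval v = p.eval 0 := by
  have hinj : Set.InjOn (id : F → F) V := fun x _ y _ hxy => hxy
  have := Lagrange.eq_interpolate (f := p) hinj (by simpa using hdeg)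
  conv_rhs => rw [this]
  rw [Lagrange.interpolate_apply, eval_finset_sum]
  refine Finset.sum_congr rfl fun v hv => ?_
  rw [eval_mul, eval_C, mul_comm]
  congr 1
  rw [Lagrange.basis, eval_prod]
  refine Finset.prod_congr rfl fun w hw => ?_
  have hwv : w ≠ v := (Finset.mem_erase.mp hw).1
  have hw0 : w ≠ 0 := fun hh => h0 (hh ▸ (Finset.mem_erase.mp hw).2)
  rw [Lagrange.basisDivisor]
  simp only [eval_mul, eval_C, eval_sub, eval_X, id]
  have hvw : v - w ≠ 0 := sub_ne_zero.mpr hwv.symm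
  have hwv' : w - v ≠ 0 := sub_ne_zero.mpr hwv
  field_simp
  ring

theorem stmt9 {F : Type*} [Field F] [DecidableEq F] (t : ℕ) (ht : 1 ≤ t)
    (V : Finset F) (hV : V.card = t) (h0 : (0 : F) ∉ V)
    (n : ℕ) (hn : 1 ≤ n)
    (s e uu e0 e1 e2 m α : Fin n → F) (a k : F)
    (g h : Fin n → Polynomial F)
    (hgdeg : ∀ i, (g i).degree < (t : WithBot ℕ))
    (hhdeg : ∀ i, (h i).degree < (t : WithBot ℕ))
    (hg0 : ∀ i, (g i).eval 0 = s i) (hh0 : ∀ i, (h i).eval 0 = e2 i)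
    (pk : F) (hpk : pk = ∑ i, -(a * s i + e i))
    (c0 c1 : Fin n → F)
    (hc0 : ∀ i, c0 i = a * uu i + e0 i)
    (hc1 : ∀ i, c1 i = pk * uu i + e1 i + k * m i)
    (chat0 chat1 : F)
    (hchat0 : chat0 = ∑ i, α i * c0 i)
    (hchat1 : chat1 = ∑ i, α i * c1 i)
    (mhat : F → F)
    (hmhat : ∀ v ∈ V, mhat v = chat0 * (∑ i, (g i).eval v) + ∑ i, (h i).eval v)
    (NS : F)
    (hNS : NS = (∑ i, α i * e1 i) + (∑ i, α i * e0 i) * (∑ i, s i)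
      + (∑ i, e2 i) - (∑ i, α i * uu i) * (∑ i, e i)) :
    chat1 + ∑ v ∈ V, (∏ w ∈ V.erase v, w / (w - v)) * mhat v
      = k * (∑ i, α i * m i) + NS := by
  set P : F[X] := C chat0 * (∑ i, g i) + ∑ i, h i with hP
  have hPdeg : P.degree < (V.card : WithBot ℕ) := by
    rw [hV]
    have h1 : (∑ i, g i).degree < (t : WithBot ℕ) :=
      lt_of_le_of_lt (degree_sum_le _ _) (by
        rw [Finset.sup_lt_iff (by exact_mod_cast WithBot.bot_lt_coe t)]
        exact fun i _ => hgdeg i)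
    have h2 : (∑ i, h i).degree < (t : WithBot ℕ) :=
      lt_of_le_of_lt (degree_sum_le _ _) (by
        rw [Finset.sup_lt_iff (by exact_mod_cast WithBot.bot_lt_coe t)]
        exact fun i _ => hhdeg i)
    exact lt_of_le_of_lt (degree_add_le _ _) (max_lt
      (lt_of_le_of_lt (degree_mul_le _ _) (by
        calc (C chat0).degree + (∑ i, g i).degree ≤ 0 + (∑ i, g i).degree := by
              gcongr; exact degree_C_le
          _ = (∑ i, g i).degree := zero_add _
          _ < _ := h1)) h2)
  have hsum : ∑ v ∈ V, (∏ w ∈ V.erase v, w / (w - v)) * mhat v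
      = chat0 * (∑ i, s i) + ∑ i, e2 i := by
    have := lagrange_at_zero V h0 P hPdeg
    calc ∑ v ∈ V, (∏ w ∈ V.erase v, w / (w - v)) * mhat v
        = ∑ v ∈ V, (∏ w ∈ V.erase v, w / (w - v)) * P.eval v := by
          refine Finset.sum_congr rfl fun v hv => ?_
          rw [hmhat v hv, hP]
          simp [eval_finset_sum]
      _ = P.eval 0 := this
      _ = chat0 * (∑ i, s i) + ∑ i, e2 i := by
          simp [hP, eval_finset_sum, hg0, hh0]
  rw [hsum, hchat1, hchat0, hNS]
  simp only [hc0, hc1, hpk]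
  simp only [mul_add, mul_sub, mul_neg, neg_mul, Finset.sum_add_distrib, Finset.sum_neg_distrib,
    Finset.mul_sum, Finset.sum_mul, mul_comm, mul_assoc, mul_left_comm]
  ring_nf
end
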